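/- Let V be the vertex set of a median graph, x₀, x ∈ V, and n ∈ ℕ. Then there exists a unique point v ∈ [x₀,x] ∩ B_nor(x₀,n) such that [x₀,x] ∩ B_nor(x₀,n) ⊆ [x₀,v]; this v is the unique point of [x₀,x] ∩ B_nor(x₀,n) at which the distance d(x₀,·) attains its maximum over [x₀,x] ∩ B_nor(x₀,n). Moreover, if d_nor(x₀,x) ≥ n, then d_nor(x₀,v) = n, i.e. v ∈ [x₀,x] ∩ S_nor(x₀,n). -/
import Mathlib


open scoped ENNReal

namespace MedianGraph

variable {V : Type*}

/-- The metric interval `[x,y]` in a graph with respect to the edge-path metric. -/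
def itv (G : SimpleGraph V) (x y : V) : Set V :=
  {z | G.dist x z + G.dist z y = G.dist x y}

/-- A subset of the vertex set is convex if it contains every interval between
two of its points. -/
def Cvx (G : SimpleGraph V) (S : Set V) : Prop :=
  ∀ a ∈ S, ∀ b ∈ S, itv G a b ⊆ S

/-- A median graph: a connected graph in which every triple of vertices has a
unique median. -/
def IsMedianGraph (G : SimpleGraph V) : Prop :=
  G.Connected ∧ ∀ x y z : V, ∃! m : V,
    m ∈ itv G x y ∧ m ∈ itv G y z ∧ m ∈ itv G z x

/-- A halfspace: a subset which is nonempty, proper, convex with convex complement. -/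
def IsHalfspace (G : SimpleGraph V) (h : Set V) : Prop :=
  h.Nonempty ∧ hᶜ.Nonempty ∧ Cvx G h ∧ Cvx G hᶜ

/-- `Hset G x y` is the set of halfspaces containing `x` but not `y`. -/
def Hset (G : SimpleGraph V) (x y : V) : Set (Set V) :=
  {h | IsHalfspace G h ∧ x ∈ h ∧ y ∉ h}

/-- The normal distance `d_nor(x,y)`: the maximum cardinality of a chain (under
inclusion) in `Hset G x y`. -/
noncomputable def dnor (G : SimpleGraph V) (x y : V) : ℕ :=
  sSup {n : ℕ | ∃ c : Set (Set V), c ⊆ Hset G x y ∧ IsChain (· ⊆ ·) c ∧ c.encard = n}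

/-- Two halfspaces cross if all four intersections of them and their
complements are nonempty. -/
def Crosses (h k : Set V) : Prop :=
  (h ∩ k).Nonempty ∧ (h ∩ kᶜ).Nonempty ∧ (hᶜ ∩ k).Nonempty ∧ (hᶜ ∩ kᶜ).Nonempty

/-- `Hn G x₀ x n`: the halfspaces `h` in `Hset G x₀ x` such that the maximum
cardinality of a chain in `{k ∈ H(x₀,x) : k ⊆ h}` equals `n`. -/
noncomputable def Hn (G : SimpleGraph V) (x₀ x : V) (n : ℕ) : Set (Set V) :=
  {h | h ∈ Hset G x₀ x ∧
    sSup {m : ℕ | ∃ c : Set (Set V), c ⊆ {k | k ∈ Hset G x₀ x ∧ k ⊆ h} ∧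
      IsChain (· ⊆ ·) c ∧ c.encard = m} = n}

/-- `Fh G x₀ x n h = {w ∈ [x₀,x] ∩ S_nor(x₀,n) : w ∉ h}`. -/
def Fh (G : SimpleGraph V) (x₀ x : V) (n : ℕ) (h : Set V) : Set V :=
  {w | w ∈ itv G x₀ x ∧ dnor G x₀ w = n ∧ w ∉ h}

/-- The graph has dimension at most `η` if every family of pairwise crossing
halfspaces has cardinality at most `η`. -/
def DimLE (G : SimpleGraph V) (η : ℕ) : Prop :=
  ∀ F : Set (Set V), (∀ h ∈ F, IsHalfspace G h) →
    (∀ h ∈ F, ∀ k ∈ F, h ≠ k → Crosses h k) → F.encard ≤ η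

end MedianGraph

open MedianGraph

section Aux

variable {V : Type*} {G : SimpleGraph V}

private lemma mem_itv_iff {a b z : V} :
    z ∈ itv G a b ↔ G.dist a z + G.dist z b = G.dist a b := Iff.rfl

private lemma itv_left (a b : V) : a ∈ itv G a b := by
  simp [mem_itv_iff, SimpleGraph.dist_self]

private lemma itv_right (a b : V) : b ∈ itv G a b := by
  simp [mem_itv_iff, SimpleGraph.dist_self]

private lemma itv_comm {a b z : V} (hz : z ∈ itv G a b) : z ∈ itv G b a := by
  rw [mem_itv_iff] at hz ⊢
  rw [SimpleGraph.dist_comm (u := b) (v := z), SimpleGraph.dist_comm (u := z) (v := a),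
    SimpleGraph.dist_comm (u := b) (v := a)]
  omega

private lemma itv_comp (hc : G.Connected) {x₀ x v w : V}
    (hv : v ∈ itv G x₀ x) (hw : w ∈ itv G v x) :
    w ∈ itv G x₀ x ∧ v ∈ itv G x₀ w := by
  have t1 := hc.dist_triangle (u := x₀) (v := v) (w := w)
  have t2 := hc.dist_triangle (u := x₀) (v := w) (w := x)
  rw [mem_itv_iff] at hv hw ⊢
  rw [mem_itv_iff]
  omega

private lemma halfspace_eq_of_adj (hG : IsMedianGraph G) {h k : Set V}
    (hh : IsHalfspace G h) (hk : IsHalfspace G k) (hsub : h ⊆ k)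
    {a b : V} (hab : G.Adj a b) (ha : a ∈ h) (hb : b ∉ k) : h = k := by
  have hc := hG.1
  refine hsub.antisymm fun z hz => ?_
  by_contra hzh
  obtain ⟨m, hm1, hm2, hm3⟩ := (hG.2 a b z).exists
  have hd1 : G.dist a b = 1 := SimpleGraph.dist_eq_one_iff_adj.mpr hab
  have hm1' : G.dist a m + G.dist m b = 1 := by rw [← hd1]; exact hm1
  have hcase : G.dist a m = 0 ∨ G.dist m b = 0 := by omega
  rcases hcase with h0 | h0
  · have hma : a = m := hc.dist_eq_zero_iff.mp h0
    subst hma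
    have hbh : b ∉ h := fun hbh => hb (hsub hbh)
    exact (hh.2.2.2 b hbh z hzh hm2) ha
  · have hmb : m = b := hc.dist_eq_zero_iff.mp h0
    subst hmb
    exact hb (hk.2.2.1 z hz a (hsub ha) hm3)

private lemma dist_getVert_le (hc : G.Connected) {s t : V} (p : G.Walk s t) :
    ∀ i, G.dist s (p.getVert i) ≤ i := by
  intro i
  induction i with
  | zero => simp [SimpleGraph.dist_self]
  | succ i ih =>
    by_cases hi : i < p.length
    · have hadj := p.adj_getVert_succ hi
      have t := hc.dist_triangle (u := s) (v := p.getVert i) (w := p.getVert (i + 1))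
      have h1 : G.dist (p.getVert i) (p.getVert (i + 1)) = 1 :=
        SimpleGraph.dist_eq_one_iff_adj.mpr hadj
      omega
    · have e1 := p.getVert_of_length_le (show p.length ≤ i by omega)
      have e2 := p.getVert_of_length_le (show p.length ≤ i + 1 by omega)
      rw [e2]
      rw [e1] at ih
      omega

private lemma getVert_dist_right {s t : V} (p : G.Walk s t) :
    ∀ i, G.dist (p.getVert i) t ≤ p.length - i := by
  induction p with
  | nil =>
    intro i
    rw [SimpleGraph.Walk.getVert_of_length_le _ (by simp)]
    simp [SimpleGraph.dist_self]
  | @cons u v w hadj q ih =>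
    intro i
    cases i with
    | zero =>
      simpa using SimpleGraph.dist_le (SimpleGraph.Walk.cons hadj q)
    | succ i =>
      rw [SimpleGraph.Walk.getVert_cons_succ]
      have := ih i
      simp only [SimpleGraph.Walk.length_cons]
      omega

private lemma getVert_spec (hc : G.Connected) {s t : V} {p : G.Walk s t}
    (hp : p.length = G.dist s t) {i : ℕ} (hi : i ≤ p.length) :
    G.dist s (p.getVert i) = i ∧ G.dist (p.getVert i) t = p.length - i ∧
      p.getVert i ∈ itv G s t := by
  have h1 := dist_getVert_le hc p i
  have h2 := getVert_dist_right p i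
  have h3 := hc.dist_triangle (u := s) (v := p.getVert i) (w := t)
  rw [mem_itv_iff]
  omega

private lemma Hset_mono {x₀ u w : V} (hu : u ∈ itv G x₀ w) :
    Hset G x₀ u ⊆ Hset G x₀ w := by
  rintro h ⟨hh, hx, hun⟩
  exact ⟨hh, hx, fun hw => hun (hh.2.2.1 x₀ hx w hw hu)⟩

private lemma chain_encard_le_dist (hG : IsMedianGraph G) {x₀ y : V} {c : Set (Set V)}
    (hsub : c ⊆ Hset G x₀ y) (hch : IsChain (· ⊆ ·) c) :
    c.encard ≤ (G.dist x₀ y : ℕ∞) := by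
  classical
  obtain ⟨p, hp⟩ := hG.1.exists_walk_length_eq_dist x₀ y
  set f : Set V → ℕ := fun h => Nat.findGreatest (fun i => p.getVert i ∈ h) p.length with hf
  have hkey : ∀ h ∈ c, f h < p.length ∧ p.getVert (f h) ∈ h ∧ p.getVert (f h + 1) ∉ h := by
    intro h hh
    obtain ⟨hhs, hx0, hy⟩ := hsub hh
    have h0 : p.getVert 0 ∈ h := by rw [p.getVert_zero]; exact hx0
    have hspec : p.getVert (f h) ∈ h :=
      Nat.findGreatest_spec (P := fun i => p.getVert i ∈ h) (m := 0) (Nat.zero_le _) h0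
    have hle : f h ≤ p.length := Nat.findGreatest_le _
    have hne : f h ≠ p.length := by
      intro he
      apply hy
      rw [← p.getVert_length, ← he]
      exact hspec
    have hlt : f h < p.length := lt_of_le_of_ne hle hne
    exact ⟨hlt, hspec,
      Nat.findGreatest_is_greatest (P := fun i => p.getVert i ∈ h) (lt_add_one _) (by omega)⟩
  have hinj : Set.InjOn f c := by
    intro h hh k hk he
    by_contra hne
    have hkh := hkey h hh
    have hkk := hkey k hk
    rcases hch hh hk hne with hsk | hks
    · exact hne (halfspace_eq_of_adj hG (hsub hh).1 (hsub hk).1 hsk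
        (p.adj_getVert_succ hkh.1) hkh.2.1 (by rw [he]; exact hkk.2.2))
    · exact hne (halfspace_eq_of_adj hG (hsub hk).1 (hsub hh).1 hks
        (p.adj_getVert_succ hkk.1) hkk.2.1 (by rw [← he]; exact hkh.2.2)).symm
  calc c.encard = (f '' c).encard := hinj.encard_image.symm
    _ ≤ ((Finset.range p.length : Finset ℕ) : Set ℕ).encard := by
        refine Set.encard_mono ?_
        rintro _ ⟨h, hh, rfl⟩
        simp [(hkey h hh).1]
    _ = (p.length : ℕ∞) := by rw [Set.encard_coe_eq_coe_finsetCard]; simp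
    _ = _ := by rw [hp]

private lemma zero_mem_dSet (x₀ y : V) :
    0 ∈ {n : ℕ | ∃ c : Set (Set V), c ⊆ Hset G x₀ y ∧ IsChain (· ⊆ ·) c ∧ c.encard = n} :=
  ⟨∅, Set.empty_subset _, Set.subsingleton_empty.isChain, by simp⟩

private lemma bddAbove_dSet (hG : IsMedianGraph G) (x₀ y : V) :
    BddAbove {n : ℕ | ∃ c : Set (Set V), c ⊆ Hset G x₀ y ∧ IsChain (· ⊆ ·) c ∧ c.encard = n} := by
  refine ⟨G.dist x₀ y, ?_⟩
  rintro m ⟨c, h1, h2, h3⟩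
  have := chain_encard_le_dist hG h1 h2
  rw [h3] at this
  exact_mod_cast this

private lemma dnor_chain_exists (hG : IsMedianGraph G) (x₀ y : V) :
    ∃ c : Set (Set V), c ⊆ Hset G x₀ y ∧ IsChain (· ⊆ ·) c ∧
      c.encard = (dnor G x₀ y : ℕ∞) :=
  Nat.sSup_mem ⟨0, zero_mem_dSet x₀ y⟩ (bddAbove_dSet hG x₀ y)

private lemma chain_encard_le_dnor (hG : IsMedianGraph G) {x₀ y : V} {c : Set (Set V)}
    (hsub : c ⊆ Hset G x₀ y) (hch : IsChain (· ⊆ ·) c) :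
    c.encard ≤ (dnor G x₀ y : ℕ∞) := by
  have hfin : c.Finite := Set.finite_of_encard_le_coe (chain_encard_le_dist hG hsub hch)
  rw [hfin.encard_eq_coe_toFinset_card]
  have hmem : hfin.toFinset.card ∈
      {n : ℕ | ∃ c : Set (Set V), c ⊆ Hset G x₀ y ∧ IsChain (· ⊆ ·) c ∧ c.encard = n} :=
    ⟨c, hsub, hch, hfin.encard_eq_coe_toFinset_card⟩
  exact_mod_cast le_csSup (bddAbove_dSet hG x₀ y) hmem

private lemma dnor_self (hG : IsMedianGraph G) (x₀ : V) : dnor G x₀ x₀ = 0 := by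
  obtain ⟨c, h1, h2, h3⟩ := dnor_chain_exists hG x₀ x₀
  have hce : c = ∅ := by
    ext h
    simp only [Set.mem_empty_iff_false, iff_false]
    intro hh
    exact (h1 hh).2.2 (h1 hh).2.1
  rw [hce] at h3
  simp only [Set.encard_empty] at h3
  exact_mod_cast h3.symm

private lemma dnor_mono (hG : IsMedianGraph G) {x₀ u w : V} (hu : u ∈ itv G x₀ w) :
    dnor G x₀ u ≤ dnor G x₀ w := by
  obtain ⟨c, h1, h2, h3⟩ := dnor_chain_exists hG x₀ u
  have := chain_encard_le_dnor hG (h1.trans (Hset_mono hu)) h2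
  rw [h3] at this
  exact_mod_cast this

private lemma dnor_median_le (hG : IsMedianGraph G) {x₀ u v w : V} (hw : w ∈ itv G u v) :
    dnor G x₀ w ≤ max (dnor G x₀ u) (dnor G x₀ v) := by
  obtain ⟨c, h1, h2, h3⟩ := dnor_chain_exists hG x₀ w
  have key : (∀ h ∈ c, u ∉ h) ∨ (∀ h ∈ c, v ∉ h) := by
    by_contra hcon
    push_neg at hcon
    obtain ⟨⟨h, hh, hhu⟩, ⟨k, hk, hkv⟩⟩ := hcon
    rcases eq_or_ne h k with rfl | hne
    · exact (h1 hh).2.2 ((h1 hh).1.2.2.1 u hhu v hkv hw)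
    · rcases h2 hh hk hne with hsk | hks
      · exact (h1 hk).2.2 ((h1 hk).1.2.2.1 u (hsk hhu) v hkv hw)
      · exact (h1 hh).2.2 ((h1 hh).1.2.2.1 u hhu v (hks hkv) hw)
  rcases key with key | key
  · have hsub' : c ⊆ Hset G x₀ u := fun h hh => ⟨(h1 hh).1, (h1 hh).2.1, key h hh⟩
    have := chain_encard_le_dnor hG hsub' h2
    rw [h3] at this
    have : dnor G x₀ w ≤ dnor G x₀ u := by exact_mod_cast this
    omega
  · have hsub' : c ⊆ Hset G x₀ v := fun h hh => ⟨(h1 hh).1, (h1 hh).2.1, key h hh⟩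
    have := chain_encard_le_dnor hG hsub' h2
    rw [h3] at this
    have : dnor G x₀ w ≤ dnor G x₀ v := by exact_mod_cast this
    omega

private lemma dnor_step (hG : IsMedianGraph G) {x₀ a b : V} (hab : G.Adj a b) :
    dnor G x₀ b ≤ dnor G x₀ a + 1 := by
  classical
  obtain ⟨c, h1, h2, h3⟩ := dnor_chain_exists hG x₀ b
  have hcDE : c = {h ∈ c | a ∉ h} ∪ {h ∈ c | a ∈ h} := by
    ext h; by_cases hah : a ∈ h <;> simp [hah]
  have hDle : ({h ∈ c | a ∉ h} : Set (Set V)).encard ≤ (dnor G x₀ a : ℕ∞) := by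
    refine chain_encard_le_dnor hG ?_ (h2.mono (Set.sep_subset _ _))
    rintro h ⟨hh, hah⟩
    exact ⟨(h1 hh).1, (h1 hh).2.1, hah⟩
  have hEle : ({h ∈ c | a ∈ h} : Set (Set V)).encard ≤ 1 := by
    rw [Set.encard_le_one_iff]
    rintro h k ⟨hh, hah⟩ ⟨hk, hak⟩
    rcases eq_or_ne h k with rfl | hne
    · rfl
    rcases h2 hh hk hne with hsk | hks
    · exact halfspace_eq_of_adj hG (h1 hh).1 (h1 hk).1 hsk hab hah (h1 hk).2.2
    · exact (halfspace_eq_of_adj hG (h1 hk).1 (h1 hh).1 hks hab hak (h1 hh).2.2).symm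
  have : c.encard ≤ (dnor G x₀ a : ℕ∞) + 1 := by
    calc c.encard = ({h ∈ c | a ∉ h} ∪ {h ∈ c | a ∈ h} : Set (Set V)).encard := by rw [← hcDE]
      _ ≤ _ := Set.encard_union_le _ _
      _ ≤ _ := add_le_add hDle hEle
  rw [h3] at this
  exact_mod_cast this

end Aux

/-- In a median graph, for all `x₀, x` and `n ∈ ℕ` there is a unique point
`v ∈ [x₀,x] ∩ B_nor(x₀,n)` with `[x₀,x] ∩ B_nor(x₀,n) ⊆ [x₀,v]`; it is the unique point of
`[x₀,x] ∩ B_nor(x₀,n)` maximizing `d(x₀,·)` there; and if `d_nor(x₀,x) ≥ n` then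
`d_nor(x₀,v) = n`. -/
theorem normal_ball_gate {V : Type*} (G : SimpleGraph V) (hG : IsMedianGraph G)
    (x₀ x : V) (n : ℕ) :
    ∃ v : V, (v ∈ itv G x₀ x ∧ dnor G x₀ v ≤ n ∧
        ∀ u ∈ itv G x₀ x, dnor G x₀ u ≤ n → u ∈ itv G x₀ v) ∧
      (∀ v' : V, (v' ∈ itv G x₀ x ∧ dnor G x₀ v' ≤ n ∧
        ∀ u ∈ itv G x₀ x, dnor G x₀ u ≤ n → u ∈ itv G x₀ v') → v' = v) ∧
      (∀ w ∈ itv G x₀ x, dnor G x₀ w ≤ n → G.dist x₀ w ≤ G.dist x₀ v) ∧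
      (∀ w ∈ itv G x₀ x, dnor G x₀ w ≤ n → G.dist x₀ w = G.dist x₀ v → w = v) ∧
      (n ≤ dnor G x₀ x → dnor G x₀ v = n) := by
  classical
  have hc := hG.1
  set S : Set V := {u | u ∈ itv G x₀ x ∧ dnor G x₀ u ≤ n} with hSdef
  have hx₀S : x₀ ∈ S := ⟨itv_left x₀ x, by rw [dnor_self hG]; omega⟩
  -- a point of S of maximal distance from x₀
  have hA : ∃ v, v ∈ S ∧ ∀ u ∈ S, G.dist x₀ u ≤ G.dist x₀ v := by
    have hbdd : BddAbove {k : ℕ | ∃ u ∈ S, G.dist x₀ u = k} := by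
      refine ⟨G.dist x₀ x, ?_⟩
      rintro k ⟨u, hu, rfl⟩
      have := hu.1
      rw [mem_itv_iff] at this
      omega
    have h0 : G.dist x₀ x₀ ∈ {k : ℕ | ∃ u ∈ S, G.dist x₀ u = k} := ⟨x₀, hx₀S, rfl⟩
    have hmem := Nat.sSup_mem ⟨_, h0⟩ hbdd
    obtain ⟨v, hv, hveq⟩ := hmem
    exact ⟨v, hv, fun u hu => hveq ▸ le_csSup hbdd ⟨u, hu, rfl⟩⟩
  obtain ⟨v, hvS, hvmax⟩ := hA
  -- the gate property
  have hgate : ∀ u ∈ S, u ∈ itv G x₀ v := by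
    intro u hu
    obtain ⟨w, hw1, hw2, hw3⟩ := (hG.2 u v x).exists
    have hwx : w ∈ itv G u x := itv_comm hw3
    have hcomp_v := itv_comp hc hvS.1 hw2
    have hcomp_u := itv_comp hc hu.1 hwx
    have hwd : dnor G x₀ w ≤ n := le_trans (dnor_median_le hG hw1) (max_le hu.2 hvS.2)
    have hwS : w ∈ S := ⟨hcomp_v.1, hwd⟩
    have h1 := hvmax w hwS
    have h2 : G.dist x₀ v + G.dist v w = G.dist x₀ w := hcomp_v.2
    have h3 : v = w := hc.dist_eq_zero_iff.mp (by omega)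
    rw [h3]
    exact hcomp_u.2
  refine ⟨v, ⟨hvS.1, hvS.2, fun u hu hun => hgate u ⟨hu, hun⟩⟩, ?_, ?_, ?_, ?_⟩
  · rintro v' ⟨h1', h2', h3'⟩
    have hv'v : v' ∈ itv G x₀ v := hgate v' ⟨h1', h2'⟩
    have hvv' : v ∈ itv G x₀ v' := h3' v hvS.1 hvS.2
    rw [mem_itv_iff] at hv'v hvv'
    have hco : G.dist v' v = G.dist v v' := SimpleGraph.dist_comm (u := v') (v := v)
    exact hc.dist_eq_zero_iff.mp (show G.dist v' v = 0 by omega)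
  · intro w hw hwn
    have := hgate w ⟨hw, hwn⟩
    rw [mem_itv_iff] at this
    omega
  · intro w hw hwn heq
    have := hgate w ⟨hw, hwn⟩
    rw [mem_itv_iff] at this
    exact hc.dist_eq_zero_iff.mp (by omega)
  · intro hn
    -- find a point on a geodesic with dnor exactly n
    obtain ⟨p, hp⟩ := hc.exists_walk_length_eq_dist x₀ x
    have hg0 : dnor G x₀ (p.getVert 0) = 0 := by
      rw [p.getVert_zero]; exact dnor_self hG x₀
    have hgd : dnor G x₀ (p.getVert p.length) = dnor G x₀ x := by
      rw [p.getVert_length]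
    set i₀ := Nat.findGreatest (fun j => dnor G x₀ (p.getVert j) ≤ n) p.length with hi₀def
    have hi₀le : i₀ ≤ p.length := Nat.findGreatest_le _
    have hi₀ : dnor G x₀ (p.getVert i₀) ≤ n :=
      Nat.findGreatest_spec (P := fun j => dnor G x₀ (p.getVert j) ≤ n) (m := 0)
        (Nat.zero_le _) (by show dnor G x₀ (p.getVert 0) ≤ n; rw [hg0]; omega)
    have hin : dnor G x₀ (p.getVert i₀) = n := by
      rcases eq_or_lt_of_le hi₀le with he | hlt
      · rw [he, hgd]
        rw [he, hgd] at hi₀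
        omega
      · have hgt : ¬ (dnor G x₀ (p.getVert (i₀ + 1)) ≤ n) :=
          Nat.findGreatest_is_greatest (P := fun j => dnor G x₀ (p.getVert j) ≤ n)
            (lt_add_one _) (by omega)
        have hstep := dnor_step hG (x₀ := x₀) (p.adj_getVert_succ hlt)
        omega
    have hmem : p.getVert i₀ ∈ itv G x₀ x := (getVert_spec hc hp hi₀le).2.2
    have huS : p.getVert i₀ ∈ S := ⟨hmem, le_of_eq hin⟩
    have hmono := dnor_mono hG (hgate _ huS)
    have := hvS.2
    omega
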